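/- arXiv:2007.03040 — 5 statements merged into one kernel-verified Lean document; each statement's English description precedes it below -/
import Mathlib

section
/- Let m = Σ_{i=1}^t m_i where the m_i are independent Bernoulli(p_i) random variables, let μ = Σ_{i=1}^t p_i, and conditionally on m let X ~ NBinom(m, q) (the number of Bernoulli(q) trials needed for m successes). Then for every real k with 1 < k ≤ 4, Pr[X ≥ k·μ/q] ≤ exp(−(√k − 1)²μ/3) + exp(−kμ(1 − 1/√k)²/2). -/
/-!
Condition on `m`. On the event `m ≥ √k μ` bound the conditional probability by `1` and apply the
upper-tail Chernoff bound to `m` with `ε = √k - 1 ∈ (0, 1]`. On `m < √k μ` the event `X ≥ k μ / q`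
says that fewer than `m` of the first `N = ⌈k μ / q⌉₊ - 1` trials succeed; since `(N + 1) q ≥ k μ`
and `m < (1 - δ) k μ` with `δ = 1 - 1 / √k`, the lower-tail Chernoff bound for `Bin(N, q)` gives the
second term.
-/

open Finset Real

namespace BinomOfGeo

variable {ι : Type*} [Fintype ι] [DecidableEq ι]

/-- The probability that the set of successes of independent `Bernoulli (p i)` trials is `S`. -/
noncomputable def bernoulliProb (p : ι → ℝ) (S : Finset ι) : ℝ :=
  (∏ i ∈ S, p i) * ∏ i ∈ Sᶜ, (1 - p i)

/-- `Pr[Bin(N, q) < m]`. -/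
noncomputable def binomProbLt (N : ℕ) (q : ℝ) (m : ℕ) : ℝ :=
  ∑ j ∈ range m, (N.choose j : ℝ) * q ^ j * (1 - q) ^ (N - j)

theorem bernoulliProb_nonneg {p : ι → ℝ} (hp : ∀ i, 0 ≤ p i ∧ p i ≤ 1) (S : Finset ι) :
    0 ≤ bernoulliProb p S :=
  mul_nonneg (prod_nonneg fun i _ => (hp i).1) (prod_nonneg fun i _ => sub_nonneg.2 (hp i).2)

theorem sum_bernoulliProb_mul_pow (p : ι → ℝ) (r : ℝ) :
    ∑ S, bernoulliProb p S * r ^ #S = ∏ i, (p i * r + (1 - p i)) := by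
  rw [Fintype.prod_add]
  refine sum_congr rfl fun S _ => ?_
  rw [bernoulliProb, prod_mul_distrib, prod_const]
  ring

theorem sum_bernoulliProb (p : ι → ℝ) : ∑ S, bernoulliProb p S = 1 := by
  simpa using sum_bernoulliProb_mul_pow p 1

theorem sum_bernoulliProb_mul_le {p : ι → ℝ} (hp : ∀ i, 0 ≤ p i ∧ p i ≤ 1) {f : ℕ → ℝ}
    {a B : ℝ} (hf : ∀ n, f n ≤ 1) (hfB : ∀ n : ℕ, (n : ℝ) < a → f n ≤ B) (hB : 0 ≤ B) :
    ∑ S, bernoulliProb p S * f #S ≤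
      ∑ S with a ≤ (#S : ℝ), bernoulliProb p S + B := by
  rw [← sum_filter_add_sum_filter_not univ (fun S : Finset ι => a ≤ (#S : ℝ))]
  gcongr with S hS S hS
  · exact mul_le_of_le_one_right (bernoulliProb_nonneg hp S) (hf _)
  · calc ∑ S with ¬a ≤ (#S : ℝ), bernoulliProb p S * f #S
        ≤ ∑ S with ¬a ≤ (#S : ℝ), bernoulliProb p S * B := by
          gcongr with S hS
          · exact bernoulliProb_nonneg hp S
          · exact hfB _ (not_le.1 (mem_filter.1 hS).2)
      _ ≤ ∑ S, bernoulliProb p S * B :=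
          sum_le_sum_of_subset_of_nonneg (filter_subset _ _)
            fun S _ _ => mul_nonneg (bernoulliProb_nonneg hp S) hB
      _ = B := by rw [← sum_mul, sum_bernoulliProb, one_mul]

theorem exp_mul_mul_sum_bernoulliProb_le {p : ι → ℝ} (hp : ∀ i, 0 ≤ p i ∧ p i ≤ 1)
    {l : ℝ} (hl : 0 ≤ l) (a : ℝ) :
    exp (l * a) * ∑ S with a ≤ (#S : ℝ), bernoulliProb p S ≤
      ∏ i, (p i * exp l + (1 - p i)) := by
  rw [← sum_bernoulliProb_mul_pow, mul_sum]
  refine (sum_le_sum fun S hS => ?_).trans (sum_le_sum_of_subset_of_nonneg (filter_subset _ _)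
    fun S _ _ => mul_nonneg (bernoulliProb_nonneg hp S) (by positivity))
  rw [mul_comm, ← exp_nat_mul, mul_comm (#S : ℝ)]
  gcongr
  · exact bernoulliProb_nonneg hp S
  · exact (mem_filter.1 hS).2

theorem sq_div_three_le_one_add_mul_log_one_add_sub {x : ℝ} (h0 : 0 ≤ x) (h1 : x ≤ 1) :
    x ^ 2 / 3 ≤ (1 + x) * log (1 + x) - x := by
  have hlog := le_log_one_add_of_nonneg h0
  have key : x ^ 2 / 3 ≤ (1 + x) * (2 * x / (x + 2)) - x := by
    rw [mul_div_assoc', div_sub' (by positivity), le_div_iff₀ (by positivity)]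
    nlinarith
  nlinarith

theorem neg_add_sq_div_two_le_one_sub_mul_log_one_sub {x : ℝ} (h0 : 0 ≤ x) (h1 : x < 1) :
    -x + x ^ 2 / 2 ≤ (1 - x) * log (1 - x) := by
  let F : ℝ → ℝ := fun y => (1 - y) * log (1 - y) + y - y ^ 2 / 2
  have hF : ∀ y < 1, HasDerivAt F (-log (1 - y) - y) y := by
    intro y hy
    have h := ((((hasDerivAt_id y).const_sub 1).mul
      (((hasDerivAt_id y).const_sub 1).log (by simp; linarith))).add (hasDerivAt_id y)).sub
      ((hasDerivAt_pow 2 y).div_const 2)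
    refine h.congr_deriv ?_
    simp only [id_eq]
    field_simp [show 1 - y ≠ 0 by linarith]
    ring
  suffices MonotoneOn F (Set.Icc 0 x) by
    have := this ⟨le_rfl, h0⟩ ⟨h0, le_rfl⟩ h0
    simp only [F, sub_zero, log_one, mul_zero, zero_add, ne_eq, OfNat.ofNat_ne_zero,
      not_false_eq_true, zero_pow, zero_div] at this
    linarith
  refine monotoneOn_of_hasDerivWithinAt_nonneg (convex_Icc 0 x)
    (fun y hy => (hF y (by linarith [hy.2])).continuousAt.continuousWithinAt)
    (fun y hy => (hF y (by linarith [(interior_subset hy : y ∈ Set.Icc 0 x).2])).hasDerivWithinAt)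
    fun y hy => ?_
  rw [interior_Icc] at hy
  linarith [log_le_sub_one_of_pos (show 0 < 1 - y by linarith [hy.2])]

theorem sum_bernoulliProb_filter_le_exp {p : ι → ℝ} (hp : ∀ i, 0 ≤ p i ∧ p i ≤ 1) {ε : ℝ}
    (hε0 : 0 ≤ ε) (hε1 : ε ≤ 1) :
    ∑ S with (1 + ε) * ∑ i, p i ≤ (#S : ℝ), bernoulliProb p S ≤
      exp (-(ε ^ 2 * (∑ i, p i) / 3)) := by
  set μ := ∑ i, p i
  have hμ : 0 ≤ μ := sum_nonneg fun i _ => (hp i).1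
  have hmgf : ∏ i, (p i * exp (log (1 + ε)) + (1 - p i)) ≤ exp (ε * μ) := by
    rw [exp_log (by linarith), mul_sum, exp_sum]
    refine prod_le_prod (fun i _ => ?_) fun i _ => ?_
    · nlinarith [hp i]
    · linarith [add_one_le_exp (ε * p i)]
  have hmarkov := (exp_mul_mul_sum_bernoulliProb_le hp (log_nonneg (by linarith))
    ((1 + ε) * μ)).trans hmgf
  rw [← le_div_iff₀' (exp_pos _), ← exp_sub] at hmarkov
  refine hmarkov.trans (exp_le_exp.2 ?_)
  nlinarith [sq_div_three_le_one_add_mul_log_one_add_sub hε0 hε1]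

theorem sum_range_choose_mul_pow_le (N L : ℕ) {q r : ℝ} (hq0 : 0 ≤ q) (hq1 : q ≤ 1)
    (hr : 0 ≤ r) :
    ∑ j ∈ range L, (N.choose j : ℝ) * q ^ j * (1 - q) ^ (N - j) * r ^ j ≤
      (q * r + (1 - q)) ^ N := by
  have h1q : 0 ≤ 1 - q := sub_nonneg.2 hq1
  calc ∑ j ∈ range L, (N.choose j : ℝ) * q ^ j * (1 - q) ^ (N - j) * r ^ j
      ≤ ∑ j ∈ range (max L (N + 1)), (N.choose j : ℝ) * q ^ j * (1 - q) ^ (N - j) * r ^ j :=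
        sum_le_sum_of_subset_of_nonneg (range_subset_range.2 (le_max_left _ _))
          fun j _ _ => by positivity
    _ = ∑ j ∈ range (N + 1), (N.choose j : ℝ) * q ^ j * (1 - q) ^ (N - j) * r ^ j := by
        refine (sum_subset (range_subset_range.2 (le_max_right _ _)) fun j _ hj => ?_).symm
        rw [Nat.choose_eq_zero_of_lt (by simpa using hj)]
        simp
    _ = (q * r + (1 - q)) ^ N := by
        rw [add_pow]
        exact sum_congr rfl fun j _ => by ring

theorem binomProbLt_le_one (N m : ℕ) {q : ℝ} (hq0 : 0 ≤ q) (hq1 : q ≤ 1) :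
    binomProbLt N q m ≤ 1 := by
  simpa [binomProbLt] using sum_range_choose_mul_pow_le N m hq0 hq1 zero_le_one

theorem binomProbLt_succ_le (N n : ℕ) {q u : ℝ} (hq0 : 0 ≤ q) (hq1 : q ≤ 1) (hu0 : 0 < u)
    (hu1 : u ≤ 1) :
    binomProbLt N q (n + 1) ≤ (q * u + (1 - q)) ^ N / u ^ n := by
  rw [le_div_iff₀ (by positivity), binomProbLt, sum_mul]
  refine (sum_le_sum fun j hj => ?_).trans (sum_range_choose_mul_pow_le N (n + 1) hq0 hq1 hu0.le)
  have h1q : 0 ≤ 1 - q := sub_nonneg.2 hq1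
  exact mul_le_mul_of_nonneg_left
    (pow_le_pow_of_le_one hu0.le hu1 (Nat.lt_succ_iff.1 (mem_range.1 hj))) (by positivity)

/-- Chernoff's lower tail. A mean `N q` that falls short of `ν` by up to `q` is paid for by the
strictness of `Bin(N, q) < m`: only `j ≤ m - 1` contribute. -/
theorem binomProbLt_le_exp {N m : ℕ} {q δ ν : ℝ} (hq0 : 0 ≤ q) (hq1 : q ≤ 1) (hδ0 : 0 ≤ δ)
    (hδ1 : δ < 1) (hν : ν ≤ (N + 1) * q) (hm : (m : ℝ) ≤ (1 - δ) * ν) :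
    binomProbLt N q m ≤ exp (-(ν * δ ^ 2 / 2)) := by
  obtain _ | n := m
  · simpa [binomProbLt] using (exp_pos _).le
  have hu : 0 < 1 - δ := by linarith
  set l := -log (1 - δ)
  have hlδ : δ ≤ l := by linarith [log_le_sub_one_of_pos hu]
  have hbase : q * (1 - δ) + (1 - q) ≤ exp (-(q * δ)) := by
    linarith [add_one_le_exp (-(q * δ))]
  have hpow : (1 - δ) ^ n = exp (-(n * l)) := by
    rw [show -((n : ℝ) * l) = n * log (1 - δ) by ring, exp_nat_mul, exp_log hu]
  have hν0 : 0 ≤ ν := by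
    nlinarith [(n.cast_nonneg : (0 : ℝ) ≤ n)]
  have hlogB := neg_add_sq_div_two_le_one_sub_mul_log_one_sub hδ0 hδ1
  calc binomProbLt N q (n + 1)
      ≤ (q * (1 - δ) + (1 - q)) ^ N / (1 - δ) ^ n :=
        binomProbLt_succ_le N n hq0 hq1 hu (by linarith)
    _ ≤ exp (-(q * δ)) ^ N / (1 - δ) ^ n := by gcongr
    _ = exp (n * l - N * (q * δ)) := by
        rw [hpow, ← exp_nat_mul, ← exp_sub]
        ring_nf
    _ ≤ exp (-(ν * δ ^ 2 / 2)) := by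
        push_cast at hm
        gcongr
        nlinarith [mul_le_mul_of_nonneg_right hm (by linarith : 0 ≤ l),
          mul_le_mul_of_nonneg_right hν hδ0, mul_le_mul_of_nonneg_left hlogB hν0,
          mul_le_mul_of_nonneg_right hq1 hδ0]

end BinomOfGeo

open BinomOfGeo

/-- The probability is written out over the outcomes `S` of the Bernoulli vector (`m = #S`),
using `Pr[X ≥ M] = Pr[Bin(M - 1, q) < m]` with `M = ⌈k μ / q⌉₊`; as `X` is integer valued,
`X ≥ k μ / q ↔ X ≥ M`. -/
theorem binom_of_geo_tail_bound_general (t : ℕ) (p : Fin t → ℝ) (hp : ∀ i, 0 ≤ p i ∧ p i ≤ 1)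
    (q : ℝ) (hq0 : 0 < q) (hq1 : q ≤ 1) (k : ℝ) (hk1 : 1 < k) (hk4 : k ≤ 4)
    (μ : ℝ) (hμ : μ = ∑ i, p i) :
    (∑ S : Finset (Fin t),
        ((∏ i ∈ S, p i) * ∏ i ∈ Sᶜ, (1 - p i)) *
          ∑ j ∈ Finset.range S.card,
            ((⌈k * μ / q⌉₊ - 1).choose j : ℝ) * q ^ j * (1 - q) ^ (⌈k * μ / q⌉₊ - 1 - j)) ≤
      Real.exp (-((Real.sqrt k - 1) ^ 2 * μ / 3)) +
        Real.exp (-(k * μ * (1 - 1 / Real.sqrt k) ^ 2 / 2)) := by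
  set N := ⌈k * μ / q⌉₊ - 1
  have hs1 : 1 ≤ √k := one_le_sqrt.2 hk1.le
  have hs2 : √k ≤ 2 := sqrt_le_iff.2 ⟨zero_le_two, by linarith⟩
  have hkμ : k * μ ≤ (N + 1) * q := by
    rw [← div_le_iff₀ hq0]
    exact (Nat.le_ceil _).trans (mod_cast le_tsub_add)
  have hfB (n : ℕ) (hn : (n : ℝ) < (1 + (√k - 1)) * μ) :
      binomProbLt N q n ≤ exp (-(k * μ * (1 - 1 / √k) ^ 2 / 2)) := by
    have hs0 : 0 < √k := by linarith
    refine binomProbLt_le_exp hq0.le hq1 (by simpa using inv_le_one_of_one_le₀ hs1)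
      (by simpa using hs0) hkμ ?_
    rw [sub_sub_cancel, ← mul_assoc, one_div_mul_eq_div, div_sqrt]
    linarith
  calc ∑ S, bernoulliProb p S * binomProbLt N q #S
      ≤ ∑ S with (1 + (√k - 1)) * μ ≤ (#S : ℝ), bernoulliProb p S +
          exp (-(k * μ * (1 - 1 / √k) ^ 2 / 2)) :=
        sum_bernoulliProb_mul_le hp (fun n => binomProbLt_le_one N n hq0.le hq1) hfB
          (exp_pos _).le
    _ ≤ _ := by
        gcongr
        subst hμ
        exact sum_bernoulliProb_filter_le_exp hp (by linarith) (by linarith)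

/-- **Tail bound for a binomial number of geometrics.**
Let `m = Σ_{i=1}^t m_i` where the `m_i` are independent `Bernoulli(p_i)`
variables, let `μ = Σ_{i=1}^t p_i`, and conditionally on `m` let
`X ~ NBinom(m, q)` be the number of `Bernoulli(q)` trials needed for `m`
successes. Then for every real `k` with `1 < k ≤ 4`,
`Pr[X ≥ k·μ/q] ≤ exp(−(√k − 1)²μ/3) + exp(−kμ(1 − 1/√k)²/2)`.

The probability is written out explicitly: we sum over the possible outcomes
`S ⊆ {1,…,t}` of the Bernoulli vector (`S` is the set of successes, so `m = |S|`),
and use the identity `Pr[X ≥ M] = Pr[Binom(M − 1, q) < m]` with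
`M = ⌈k·μ/q⌉` (as `X` is integer valued, `X ≥ k·μ/q ↔ X ≥ M`). -/
theorem binom_of_geo_tail_bound (t : ℕ) (p : Fin t → ℝ) (hp : ∀ i, 0 ≤ p i ∧ p i ≤ 1)
    (q : ℝ) (hq0 : 0 < q) (hq1 : q ≤ 1) (k : ℝ) (hk1 : 1 < k) (hk4 : k ≤ 4)
    (μ : ℝ) (hμ : μ = ∑ i, p i) (hμpos : 0 < μ) :
    (∑ S : Finset (Fin t),
        ((∏ i ∈ S, p i) * ∏ i ∈ Sᶜ, (1 - p i)) *
          ∑ j ∈ Finset.range S.card,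
            ((⌈k * μ / q⌉₊ - 1).choose j : ℝ) * q ^ j * (1 - q) ^ (⌈k * μ / q⌉₊ - 1 - j)) ≤
      Real.exp (-((Real.sqrt k - 1) ^ 2 * μ / 3)) +
        Real.exp (-(k * μ * (1 - 1 / Real.sqrt k) ^ 2 / 2)) :=
  binom_of_geo_tail_bound_general t p hp q hq0 hq1 k hk1 hk4 μ hμ
end

section
/- For any 0 < c ≤ 0.042, the quantity ((1+c/2)^(1+c/2) / ((c/2)^c · (1−c/2)^(1−c/2))) · exp(−(2−5c)²/(8(2−c))) is strictly less than 1. -/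
open Real

/-!
Taking logarithms, with `x = c / 2` the claim is
`(1 + x) log (1 + x) - c log x - (1 - x) log (1 - x) < (2 - 5c)² / (8 (2 - c))`.
The inequality `log t ≤ sinh (log t)` for `t ≥ 1` (and its mirror image for `t ≤ 1`) bounds the
first and last terms together by `c`. The middle term is bounded through the tangent line of
`t ↦ t log t`, taken at the endpoint `a = 0.042`: `-c log (c/2) ≤ a - c + c log (2/a)`. What remains,
`a + c log (1000/21) < (2 - 5c)² / (8 (2 - c))`, is a quadratic inequality once `log (1000/21)` is
bounded numerically from `log 2`.
-/

lemma Real.mul_log_le_sq_sub_one_div_two {t : ℝ} (ht : 1 ≤ t) : t * log t ≤ (t ^ 2 - 1) / 2 := by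
  have ht0 : 0 < t := by linarith
  have hlog : log t ≤ (t - t⁻¹) / 2 := by
    rw [← sinh_log ht0]
    exact self_le_sinh_iff.mpr (log_nonneg ht)
  calc t * log t ≤ t * ((t - t⁻¹) / 2) := mul_le_mul_of_nonneg_left hlog ht0.le
    _ = (t ^ 2 - 1) / 2 := by field_simp

lemma Real.sq_sub_one_div_two_le_mul_log {t : ℝ} (ht0 : 0 < t) (ht1 : t ≤ 1) :
    (t ^ 2 - 1) / 2 ≤ t * log t := by
  have hlog : (t - t⁻¹) / 2 ≤ log t := by
    rw [← sinh_log ht0]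
    exact sinh_le_self_iff.mpr (log_nonpos ht0.le ht1)
  calc (t ^ 2 - 1) / 2 = t * ((t - t⁻¹) / 2) := by field_simp
    _ ≤ t * log t := mul_le_mul_of_nonneg_left hlog ht0.le

lemma one_add_mul_log_sub_one_sub_mul_log_le {x : ℝ} (hx0 : 0 ≤ x) (hx1 : x < 1) :
    (1 + x) * log (1 + x) - (1 - x) * log (1 - x) ≤ 2 * x := by
  have hp := mul_log_le_sq_sub_one_div_two (t := 1 + x) (by linarith)
  have hm := sq_sub_one_div_two_le_mul_log (t := 1 - x) (by linarith) (by linarith)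
  linarith

lemma Real.sub_le_mul_log_div {x y : ℝ} (hx : 0 ≤ x) (hy : 0 < y) : x - y ≤ x * log (x / y) := by
  have h := self_sub_one_le_mul_log (div_nonneg hx hy.le)
  calc x - y = y * (x / y - 1) := by field_simp
    _ ≤ y * (x / y * log (x / y)) := mul_le_mul_of_nonneg_left h hy.le
    _ = x * log (x / y) := by field_simp

lemma log_thousand_div_twentyone_lt : log (1000 / 21) < 3.866 := by
  -- `(1000 / 21)² / 2¹¹ ≈ 1.107` is close to `1`, so `log r ≤ r - 1` loses little there.
  have hsq : log ((1000 / 21) ^ 2) = 11 * log 2 + log (1000 ^ 2 / (21 ^ 2 * 2 ^ 11)) := by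
    rw [show ((1000 : ℝ) / 21) ^ 2 = 2 ^ 11 * (1000 ^ 2 / (21 ^ 2 * 2 ^ 11)) by norm_num,
      log_mul (by norm_num) (by norm_num), log_pow]
    push_cast
    ring
  rw [log_pow] at hsq
  have hrem := log_le_sub_one_of_pos (x := 1000 ^ 2 / (21 ^ 2 * 2 ^ 11)) (by norm_num)
  have h2 := log_two_lt_d9
  norm_num at hrem h2 ⊢
  linarith

lemma affine_lt_sq_div_of_le {c : ℝ} (hc : c ≤ 0.042) :
    21 / 500 + 3.866 * c < (2 - 5 * c) ^ 2 / (8 * (2 - c)) := by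
  norm_num at hc ⊢
  rw [lt_div_iff₀ (by linarith)]
  nlinarith [mul_nonneg (sub_nonneg.mpr hc) (sub_nonneg.mpr hc)]

/-- The key real-analytic inequality in the substitution-only analysis:
for `0 < c ≤ 0.042`,
`((1+c/2)^(1+c/2) / ((c/2)^c · (1−c/2)^(1−c/2))) · exp(−(2−5c)²/(8(2−c))) < 1`. -/
theorem sub_only_base_lt_one (c : ℝ) (hc0 : 0 < c) (hc : c ≤ 0.042) :
    (1 + c / 2) ^ (1 + c / 2) / ((c / 2) ^ c * (1 - c / 2) ^ (1 - c / 2)) *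
      Real.exp (-(2 - 5 * c) ^ 2 / (8 * (2 - c))) < 1 := by
  have hx0 : 0 < c / 2 := by positivity
  have hx1 : c / 2 < 1 := by norm_num at hc; linarith
  rw [rpow_def_of_pos (by linarith), rpow_def_of_pos hx0, rpow_def_of_pos (by linarith),
    ← exp_add, ← exp_sub, ← exp_add, exp_lt_one_iff, neg_div]
  have hent := one_add_mul_log_sub_one_sub_mul_log_le hx0.le hx1
  have htangent := sub_le_mul_log_div hc0.le (show (0 : ℝ) < 21 / 500 by norm_num)
  have hlog_split : log (c / 2) = log (c / (21 / 500)) - log (1000 / 21) := by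
    rw [← log_div (by positivity) (by norm_num)]
    ring_nf
  have hlog := mul_lt_mul_of_pos_left log_thousand_div_twentyone_lt hc0
  have hquad := affine_lt_sq_div_of_le hc
  rw [hlog_split]
  linarith
end

section
/- The number of strings s' over {0,1} with ED(s, s') ≤ D, for a fixed bitstring s of length m, is at most binom(4m + 5D + 4, D), which by Stirling is at most (4e·m/D + 5e + 4e/D)^D. -/
open Real

namespace Levenshtein

/-- A cost function for edit distance (reinstated: removed from Mathlib). -/
structure Cost (α β δ : Type*) where
  delete : α → δ
  insert : β → δ
  substitute : α → β → δ

/-- The default cost: insertions, deletions and substitutions of distinct letters cost `1`. -/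
def defaultCost {α : Type*} [DecidableEq α] : Cost α α ℕ where
  delete _ := 1
  insert _ := 1
  substitute a b := if a = b then 0 else 1

/-- Inner loop of the dynamic-programming Levenshtein computation. -/
def impl {α β δ : Type*} [AddZeroClass δ] [Min δ] (C : Cost α β δ)
    (xs : List α) (y : β) (d : {r : List δ // 0 < r.length}) : {r : List δ // 0 < r.length} :=
  let ⟨ds, w⟩ := d
  xs.zip (ds.zip ds.tail) |>.foldr
    (init := ⟨[C.insert y + ds.getLast (List.length_pos_iff.mp w)], by simp⟩)
    (fun ⟨x, d₀, d₁⟩ ⟨r, w⟩ =>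
      ⟨min (C.delete x + r[0]) (min (C.insert y + d₀) (C.substitute x y + d₁)) :: r, by simp⟩)

end Levenshtein

open Levenshtein in
/-- Levenshtein distances of all suffixes of `xs` to `ys`. -/
def suffixLevenshtein {α β δ : Type*} [AddZeroClass δ] [Min δ] (C : Cost α β δ)
    (xs : List α) (ys : List β) : {r : List δ // 0 < r.length} :=
  ys.foldr
    (impl C xs)
    (xs.foldr (init := ⟨[0], by simp⟩)
      (fun a ⟨r, w⟩ => ⟨(C.delete a + r[0]) :: r, by simp⟩))

open Levenshtein in
/-- The Levenshtein distance with cost function `C`. -/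
def levenshtein {α β δ : Type*} [AddZeroClass δ] [Min δ] (C : Cost α β δ)
    (xs : List α) (ys : List β) : δ :=
  let ⟨r, w⟩ := suffixLevenshtein C xs ys
  r[0]

/-!
Rather than encoding edit scripts, count by recursion on the first letters. A string within
distance `D + 1` of `a :: s` is empty, or is `a :: t` with `t` within `D + 1` of `s`, or lies
within `D` of `s`, or is `!a :: t` with `t` within `D` of `a :: s` or of `s`. So the ball sizes
satisfy `B(a :: s, D + 1) ≤ 1 + B(s, D + 1) + 2 B(s, D) + B(a :: s, D)`, and four steps of
Pascal's rule show that `binom(4m + 5D + 4, D)` obeys this recursion with room to spare.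
The exponential bound is `binom(n, D) ≤ n^D / D! ≤ (e n / D)^D`, since `D^D / D! ≤ e^D`.
-/

open Levenshtein

section Recursion

variable {α β δ : Type*} [AddZeroClass δ] [Min δ] {C : Cost α β δ}

theorem Levenshtein.impl_length {xs : List α} {y : β} (d : {r : List δ // 0 < r.length})
    (hd : d.1.length = xs.length + 1) : (impl C xs y d).1.length = xs.length + 1 := by
  induction xs generalizing d with
  | nil => rfl
  | cons x xs ih =>
    match d, hd with
    | ⟨d₀ :: d₁ :: ds, _⟩, hd =>
      simpa [impl] using ih ⟨d₁ :: ds, by simp⟩ (by simpa using hd)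

theorem Levenshtein.impl_cons (x : α) (xs : List α) (y : β) (d : δ) (ds : List δ) (hds) :
    impl C (x :: xs) y ⟨d :: ds, by simp⟩ =
      ⟨min (C.delete x + (impl C xs y ⟨ds, hds⟩).1[0]'(impl _ _ _ _).2)
          (min (C.insert y + d) (C.substitute x y + ds[0])) ::
        (impl C xs y ⟨ds, hds⟩).1, by simp⟩ := by
  match ds, hds with
  | _ :: _, _ => rfl

theorem suffixLevenshtein_length (xs : List α) (ys : List β) :
    (suffixLevenshtein C xs ys).1.length = xs.length + 1 := by
  induction ys with
  | nil => induction xs <;> simp_all [suffixLevenshtein]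
  | cons y ys ih => exact impl_length _ ih

theorem suffixLevenshtein_cons_left (x : α) (xs : List α) (ys : List β) :
    suffixLevenshtein C (x :: xs) ys =
      ⟨levenshtein C (x :: xs) ys :: (suffixLevenshtein C xs ys).1, by simp⟩ := by
  induction ys with
  | nil => rfl
  | cons y ys ih =>
    have htail : (suffixLevenshtein C (x :: xs) (y :: ys)).1.tail =
        (suffixLevenshtein C xs (y :: ys)).1 := by
      change (impl C (x :: xs) y (suffixLevenshtein C (x :: xs) ys)).1.tail = _
      rw [ih, impl_cons _ _ _ _ _ (suffixLevenshtein C xs ys).2]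
      rfl
    apply Subtype.ext
    rw [← htail]
    change _ = (suffixLevenshtein C (x :: xs) (y :: ys)).1[0]'(suffixLevenshtein _ _ _).2 :: _
    rw [List.getElem_zero, List.cons_head_tail]

@[simp] theorem levenshtein_cons_nil (x : α) (xs : List α) :
    levenshtein C (x :: xs) [] = C.delete x + levenshtein C xs [] := rfl

@[simp] theorem levenshtein_nil_cons (y : β) (ys : List β) :
    levenshtein C [] (y :: ys) = C.insert y + levenshtein C [] ys := by
  change (impl C [] y (suffixLevenshtein C [] ys)).1[0]'(impl _ _ _ _).2 =
    C.insert y + (suffixLevenshtein C [] ys).1[0]'(suffixLevenshtein _ _ _).2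
  have h := suffixLevenshtein_length (C := C) [] ys
  generalize suffixLevenshtein C [] ys = S at h ⊢
  match S, h with
  | ⟨[_], _⟩, _ => rfl

@[simp] theorem levenshtein_cons_cons (x : α) (xs : List α) (y : β) (ys : List β) :
    levenshtein C (x :: xs) (y :: ys) =
      min (C.delete x + levenshtein C xs (y :: ys))
        (min (C.insert y + levenshtein C (x :: xs) ys)
          (C.substitute x y + levenshtein C xs ys)) := by
  change (impl C (x :: xs) y (suffixLevenshtein C (x :: xs) ys)).1[0]'(impl _ _ _ _).2 = _
  simp only [suffixLevenshtein_cons_left, impl_cons _ _ _ _ _ (suffixLevenshtein C xs ys).2]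
  rfl

end Recursion

section DefaultCost

variable {α : Type*} [DecidableEq α]

@[simp] theorem Levenshtein.defaultCost_delete (a : α) :
    (defaultCost : Cost α α ℕ).delete a = 1 := rfl

@[simp] theorem Levenshtein.defaultCost_insert (a : α) :
    (defaultCost : Cost α α ℕ).insert a = 1 := rfl

@[simp] theorem levenshtein_defaultCost_nil_left (t : List α) :
    levenshtein defaultCost [] t = t.length := by
  induction t with
  | nil => rfl
  | cons b t ih => simp [ih, add_comm]

theorem levenshtein_defaultCost_cons_cons (a b : α) (s t : List α) :
    levenshtein defaultCost (a :: s) (b :: t) =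
      min (1 + levenshtein defaultCost s (b :: t))
        (min (1 + levenshtein defaultCost (a :: s) t)
          ((if a = b then 0 else 1) + levenshtein defaultCost s t)) :=
  levenshtein_cons_cons ..

theorem eq_of_levenshtein_defaultCost_eq_zero :
    ∀ {s t : List α}, levenshtein defaultCost s t = 0 → s = t
  | [], t, h => by simp_all
  | a :: s, [], h => by simp_all
  | a :: s, b :: t, h => by
    rw [levenshtein_defaultCost_cons_cons] at h
    split_ifs at h with hab
    · rw [hab, eq_of_levenshtein_defaultCost_eq_zero (s := s) (t := t) (by omega)]
    · omega

theorem length_le_length_add_levenshtein_defaultCost :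
    ∀ s t : List α, t.length ≤ s.length + levenshtein defaultCost s t
  | [], t => by simp
  | a :: s, [] => by simp
  | a :: s, b :: t => by
    have h₁ := length_le_length_add_levenshtein_defaultCost s (b :: t)
    have h₂ := length_le_length_add_levenshtein_defaultCost (a :: s) t
    have h₃ := length_le_length_add_levenshtein_defaultCost s t
    simp only [levenshtein_defaultCost_cons_cons, List.length_cons] at *
    split_ifs <;> omega

theorem levenshtein_defaultCost_cons_left_le (a : α) (s t : List α) :
    levenshtein defaultCost (a :: s) t ≤ 1 + levenshtein defaultCost s t := by
  cases t with
  | nil => simp [add_comm]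
  | cons b t => rw [levenshtein_defaultCost_cons_cons]; omega

theorem levenshtein_defaultCost_cons_right_le (s : List α) (b : α) (t : List α) :
    levenshtein defaultCost s (b :: t) ≤ 1 + levenshtein defaultCost s t := by
  cases s with
  | nil => simp [add_comm]
  | cons a s => rw [levenshtein_defaultCost_cons_cons]; omega

theorem levenshtein_defaultCost_le_cons_right (s : List α) (b : α) (t : List α) :
    levenshtein defaultCost s t ≤ 1 + levenshtein defaultCost s (b :: t) := by
  induction s with
  | nil => simp; omega
  | cons a s ih =>
    have := levenshtein_defaultCost_cons_left_le a s t
    rw [levenshtein_defaultCost_cons_cons]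
    split_ifs <;> omega

theorem levenshtein_defaultCost_le_cons_left (a : α) (s t : List α) :
    levenshtein defaultCost s t ≤ 1 + levenshtein defaultCost (a :: s) t := by
  induction t with
  | nil => simp; omega
  | cons b t ih =>
    have := levenshtein_defaultCost_cons_right_le s b t
    rw [levenshtein_defaultCost_cons_cons]
    split_ifs <;> omega

theorem levenshtein_defaultCost_le_cons_cons (a : α) (s t : List α) :
    levenshtein defaultCost s t ≤ levenshtein defaultCost (a :: s) (a :: t) := by
  have h₁ := levenshtein_defaultCost_le_cons_right s a t
  have h₂ := levenshtein_defaultCost_le_cons_left a s t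
  rw [levenshtein_defaultCost_cons_cons, if_pos rfl]
  omega

end DefaultCost

section Ball

variable {α : Type*} [DecidableEq α]

def levenshteinBall (s : List α) (D : ℕ) : Set (List α) :=
  {t | levenshtein defaultCost s t ≤ D}

instance [Finite α] (s : List α) (D : ℕ) : Finite (levenshteinBall s D) :=
  (List.finite_length_le α (s.length + D)).subset fun t ht =>
    (length_le_length_add_levenshtein_defaultCost s t).trans (Nat.add_le_add_left ht _)

theorem levenshteinBall_zero_subset (s : List α) : levenshteinBall s 0 ⊆ {s} :=
  fun _ ht => (eq_of_levenshtein_defaultCost_eq_zero (Nat.le_zero.mp ht)).symm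

theorem levenshteinBall_nil_succ_subset (D : ℕ) :
    levenshteinBall ([] : List Bool) (D + 1) ⊆
      {[]} ∪ List.cons true '' levenshteinBall [] D ∪
        List.cons false '' levenshteinBall [] D := by
  rintro (_ | ⟨_ | _, t⟩) ht
  · simp
  · exact Or.inr ⟨t, by simpa [levenshteinBall] using ht, rfl⟩
  · exact Or.inl (Or.inr ⟨t, by simpa [levenshteinBall] using ht, rfl⟩)

theorem levenshteinBall_cons_succ_subset (a : Bool) (s : List Bool) (D : ℕ) :
    levenshteinBall (a :: s) (D + 1) ⊆
      {[]} ∪ List.cons a '' levenshteinBall s (D + 1) ∪ levenshteinBall s D ∪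
        List.cons (!a) '' levenshteinBall (a :: s) D ∪
          List.cons (!a) '' levenshteinBall s D := by
  rintro (_ | ⟨c, t⟩) ht
  · simp
  simp only [levenshteinBall, Set.mem_ofPred_eq] at ht
  obtain rfl | rfl : c = a ∨ c = !a := by cases a <;> cases c <;> simp
  · exact Or.inl (Or.inl (Or.inl (Or.inr
      ⟨t, (levenshtein_defaultCost_le_cons_cons c s t).trans ht, rfl⟩)))
  · rw [levenshtein_defaultCost_cons_cons, if_neg (by cases a <;> simp)] at ht
    obtain h | h | h : levenshtein defaultCost s ((!a) :: t) ≤ D ∨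
        levenshtein defaultCost (a :: s) t ≤ D ∨ levenshtein defaultCost s t ≤ D := by omega
    · exact Or.inl (Or.inl (Or.inr h))
    · exact Or.inl (Or.inr ⟨t, h, rfl⟩)
    · exact Or.inr ⟨t, h, rfl⟩

theorem ncard_levenshteinBall_nil_succ_le (D : ℕ) :
    (levenshteinBall ([] : List Bool) (D + 1)).ncard ≤
      1 + 2 * (levenshteinBall ([] : List Bool) D).ncard := by
  grw [Set.ncard_le_ncard (levenshteinBall_nil_succ_subset D), Set.ncard_union_le,
    Set.ncard_union_le]
  simp only [Set.ncard_singleton, Set.ncard_image_of_injective _ List.cons_injective]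
  omega

theorem ncard_levenshteinBall_cons_succ_le (a : Bool) (s : List Bool) (D : ℕ) :
    (levenshteinBall (a :: s) (D + 1)).ncard ≤ 1 + (levenshteinBall s (D + 1)).ncard +
      2 * (levenshteinBall s D).ncard + (levenshteinBall (a :: s) D).ncard := by
  grw [Set.ncard_le_ncard (levenshteinBall_cons_succ_subset a s D), Set.ncard_union_le,
    Set.ncard_union_le, Set.ncard_union_le, Set.ncard_union_le]
  simp only [Set.ncard_singleton, Set.ncard_image_of_injective _ List.cons_injective]
  omega

end Ball

theorem Nat.choose_add_four_succ (n k : ℕ) :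
    (n + 4).choose (k + 1) =
      (n + 3).choose k + (n + 2).choose k + (n + 1).choose k + n.choose k + n.choose (k + 1) := by
  simp only [Nat.choose_succ_succ']
  ring

theorem Nat.one_add_two_mul_choose_le {n k : ℕ} (h : k ≤ n + 1) :
    1 + 2 * n.choose k ≤ (n + 5).choose (k + 1) := by
  have := Nat.choose_add_four_succ (n + 1) k
  simp only [add_assoc, Nat.reduceAdd] at this
  have := Nat.choose_le_choose k (show n ≤ n + 3 by omega)
  have := Nat.choose_le_choose k (show n ≤ n + 4 by omega)
  have := Nat.choose_pos h
  omega

theorem Nat.one_add_choose_add_two_mul_choose_add_choose_le {n k : ℕ} (h : k ≤ n + 5) :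
    1 + (n + 5).choose (k + 1) + 2 * n.choose k + (n + 4).choose k ≤ (n + 9).choose (k + 1) := by
  have := Nat.choose_add_four_succ (n + 5) k
  simp only [add_assoc, Nat.reduceAdd] at this
  have := Nat.choose_le_choose k (show n ≤ n + 6 by omega)
  have := Nat.choose_le_choose k (show n ≤ n + 7 by omega)
  have := Nat.choose_le_choose k (show n + 4 ≤ n + 8 by omega)
  have := Nat.choose_pos h
  omega

theorem ncard_levenshteinBall_le_choose (s : List Bool) (D : ℕ) :
    (levenshteinBall s D).ncard ≤ (4 * s.length + 5 * D + 4).choose D := by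
  induction D generalizing s with
  | zero => simpa using Set.ncard_le_ncard (levenshteinBall_zero_subset s)
  | succ D ihD =>
    induction s with
    | nil =>
      grw [ncard_levenshteinBall_nil_succ_le, ihD]
      rw [List.length_nil, show 4 * 0 + 5 * (D + 1) + 4 = (4 * 0 + 5 * D + 4) + 5 by ring]
      exact Nat.one_add_two_mul_choose_le (by omega)
    | cons a s ihs =>
      grw [ncard_levenshteinBall_cons_succ_le, ihs, ihD, ihD]
      rw [List.length_cons,
        show 4 * s.length + 5 * (D + 1) + 4 = (4 * s.length + 5 * D + 4) + 5 by ring,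
        show 4 * (s.length + 1) + 5 * D + 4 = (4 * s.length + 5 * D + 4) + 4 by ring,
        show 4 * (s.length + 1) + 5 * (D + 1) + 4 = (4 * s.length + 5 * D + 4) + 9 by ring]
      exact Nat.one_add_choose_add_two_mul_choose_add_choose_le (by omega)

open Nat in
theorem Nat.choose_le_exp_one_mul_div_pow (n k : ℕ) :
    (n.choose k : ℝ) ≤ (exp 1 * n / k) ^ k := by
  rcases k.eq_zero_or_pos with rfl | hk
  · simp
  calc (n.choose k : ℝ) ≤ n ^ k / k ! := Nat.choose_le_pow_div k n
    _ = (n / k) ^ k * (k ^ k / k !) := by rw [div_pow, div_mul_div_cancel₀ (by positivity)]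
    _ ≤ (n / k) ^ k * exp 1 ^ k := by
      rw [exp_one_pow]
      gcongr
      exact pow_div_factorial_le_exp _ k.cast_nonneg k
    _ = (exp 1 * n / k) ^ k := by rw [← mul_pow, mul_div_assoc, mul_comm]

/-- **Counting the Levenshtein ball.** For a fixed bitstring `s` of length `m`,
the number of strings `s'` over `{0,1}` with `ED(s, s') ≤ D` is at most
`binom(4m + 5D + 4, D)`, which by Stirling is at most
`(4e·m/D + 5e + 4e/D)^D`. -/
theorem levenshtein_ball_count (m D : ℕ) (hD : 0 < D) (s : List Bool) (hs : s.length = m) :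
    ({s' : List Bool | levenshtein Levenshtein.defaultCost s s' ≤ D}.ncard ≤
        (4 * m + 5 * D + 4).choose D) ∧
      (((4 * m + 5 * D + 4).choose D : ℝ) ≤
        (4 * Real.exp 1 * m / D + 5 * Real.exp 1 + 4 * Real.exp 1 / D) ^ D) := by
  subst hs
  refine ⟨ncard_levenshteinBall_le_choose s D, ?_⟩
  convert Nat.choose_le_exp_one_mul_div_pow (4 * s.length + 5 * D + 4) D using 2
  field_simp
  push_cast
  ring
end

section
/- Fix a threshold L = k ln n. Every set B of disjoint 'breaks' (intervals in [n]) each of length at least L and with total length in [i·L, (i+1)·L) can be injectively mapped to at most i contiguous subintervals of [n], each either empty or with length in [L, 2L). Consequently, the number of such break configurations is at most (n·L + 1)^i. -/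
/-!
Write the length of a break as `ℓ = qL + r` with `q ≥ 1` and `r < L`, and cut it into `q - 1`
pieces of length `L` and one of length `L + r`. Every piece is recorded with the start of its
break, not as a consecutive sub-interval (a break of length `2L` and two adjacent breaks of length
`L` have the same consecutive pieces). Since the breaks of a configuration have distinct starts,
the break starting at `a` is recovered as the total length of the pieces starting at `a`, so the
multiset of pieces determines the configuration. It has at most `∑ ℓ / L ≤ i` elements, each in
`[1, n] × [L, 2L)`; listing it and padding with the empty interval `(0, 0)` maps the
configurations injectively to functions from `Fin i` to a set of size at most `nL + 1`.
-/

open Finset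

namespace BreakConfiguration

def padToFin {α : Type*} (d : α) (i : ℕ) (l : List α) : Fin i → α := fun j => l.getD j d

lemma padToFin_injOn {α : Type*} (d : α) (i : ℕ) :
    Set.InjOn (padToFin d i) {l | l.length ≤ i ∧ d ∉ l} := by
  rintro l ⟨hl, hdl⟩ l' ⟨hl', hdl'⟩ h
  have hgetD : ∀ j, l.getD j d = l'.getD j d := by
    intro j
    by_cases hj : j < i
    · exact congrFun h ⟨j, hj⟩
    · rw [List.getD_eq_default _ _ (by omega), List.getD_eq_default _ _ (by omega)]
  refine List.ext_getElem? fun j => ?_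
  have hj := hgetD j
  rw [List.getD_eq_getElem?_getD, List.getD_eq_getElem?_getD] at hj
  cases h₁ : l[j]? <;> cases h₂ : l'[j]? <;>
    simp only [h₁, h₂, Option.getD_none, Option.getD_some] at hj
  · rfl
  · exact absurd (hj ▸ List.mem_of_getElem? h₂) hdl'
  · exact absurd (hj ▸ List.mem_of_getElem? h₁) hdl
  · rw [hj]

lemma padToFin_apply_eq_or_mem {α : Type*} (d : α) (i : ℕ) (l : List α) (j : Fin i) :
    padToFin d i l j = d ∨ padToFin d i l j ∈ l := by
  unfold padToFin
  rcases lt_or_ge (j : ℕ) l.length with hj | hj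
  · exact .inr (List.getD_eq_getElem l d hj ▸ List.getElem_mem hj)
  · exact .inl (List.getD_eq_default l d hj)

def breakPieces (L : ℕ) (b : ℕ × ℕ) : Multiset (ℕ × ℕ) :=
  (b.1, L + b.2 % L) ::ₘ Multiset.replicate (b.2 / L - 1) (b.1, L)

def pieces (L : ℕ) (B : Finset (ℕ × ℕ)) : Multiset (ℕ × ℕ) := B.val.bind (breakPieces L)

def lengthAt (a : ℕ) (M : Multiset (ℕ × ℕ)) : ℕ := ((M.filter (·.1 = a)).map Prod.snd).sum

section breakPieces

variable {L : ℕ} {b p : ℕ × ℕ}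

lemma fst_of_mem_breakPieces (hp : p ∈ breakPieces L b) : p.1 = b.1 := by
  rcases Multiset.mem_cons.mp hp with rfl | hp
  · rfl
  · rw [Multiset.eq_of_mem_replicate hp]

lemma snd_of_mem_breakPieces (hL : 0 < L) (hb : L ≤ b.2) (hp : p ∈ breakPieces L b) :
    L ≤ p.2 ∧ p.2 < 2 * L ∧ p.2 ≤ b.2 := by
  have hmod := Nat.mod_lt b.2 hL
  have hdiv : L ≤ b.2 / L * L := Nat.le_mul_of_pos_left L (Nat.div_pos hb hL)
  have hsplit := Nat.mod_add_div' b.2 L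
  rcases Multiset.mem_cons.mp hp with rfl | hp
  · dsimp only
    omega
  · rw [Multiset.eq_of_mem_replicate hp]
    omega

lemma sum_snd_breakPieces (hb : L ≤ b.2) : ((breakPieces L b).map Prod.snd).sum = b.2 := by
  rcases L.eq_zero_or_pos with rfl | hL
  · simp [breakPieces]
  have hdiv : L ≤ b.2 / L * L := Nat.le_mul_of_pos_left L (Nat.div_pos hb hL)
  have hsplit := Nat.mod_add_div' b.2 L
  simp only [breakPieces, Multiset.map_cons, Multiset.map_replicate, Multiset.sum_cons,
    Multiset.sum_replicate, smul_eq_mul, Nat.sub_mul, one_mul]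
  omega

lemma card_breakPieces_mul_le (hb : L ≤ b.2) : Multiset.card (breakPieces L b) * L ≤ b.2 := by
  rcases L.eq_zero_or_pos with rfl | hL
  · simp
  rw [breakPieces, Multiset.card_cons, Multiset.card_replicate,
    Nat.sub_add_cancel (Nat.div_pos hb hL)]
  exact Nat.div_mul_le_self b.2 L

lemma lengthAt_breakPieces (hb : L ≤ b.2) (a : ℕ) :
    lengthAt a (breakPieces L b) = if b.1 = a then b.2 else 0 := by
  split_ifs with h
  · rw [lengthAt, Multiset.filter_eq_self.mpr fun p hp => (fst_of_mem_breakPieces hp).trans h,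
      sum_snd_breakPieces hb]
  · rw [lengthAt, Multiset.filter_eq_nil.mpr fun p hp => (fst_of_mem_breakPieces hp).symm ▸ h]
    rfl

end breakPieces

lemma lengthAt_bind (a : ℕ) (B : Finset (ℕ × ℕ)) (f : ℕ × ℕ → Multiset (ℕ × ℕ)) :
    lengthAt a (B.val.bind f) = ∑ b ∈ B, lengthAt a (f b) := by
  rw [lengthAt, Multiset.filter_bind, Multiset.map_bind, Multiset.sum_bind]
  rfl

section pieces

variable {L : ℕ} {b p : ℕ × ℕ} {B : Finset (ℕ × ℕ)}

lemma exists_mem_of_mem_pieces (hp : p ∈ pieces L B) : ∃ b ∈ B, p ∈ breakPieces L b :=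
  Multiset.mem_bind.mp hp

lemma lengthAt_pieces (hlen : ∀ b ∈ B, L ≤ b.2) (a : ℕ) :
    lengthAt a (pieces L B) = ∑ b ∈ B, if b.1 = a then b.2 else 0 := by
  rw [pieces, lengthAt_bind]
  exact Finset.sum_congr rfl fun b hb => lengthAt_breakPieces (hlen b hb) a

lemma lengthAt_pieces_of_mem (hlen : ∀ b ∈ B, L ≤ b.2)
    (hfst : Set.InjOn Prod.fst (B : Set (ℕ × ℕ))) (hb : b ∈ B) :
    lengthAt b.1 (pieces L B) = b.2 := by
  rw [lengthAt_pieces hlen, Finset.sum_eq_single_of_mem b hb fun b' hb' hne => ?_, if_pos rfl]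
  exact if_neg fun h => hne (hfst hb' hb h)

lemma exists_fst_eq_of_lengthAt_pieces_ne_zero (hlen : ∀ b ∈ B, L ≤ b.2) {a : ℕ}
    (h : lengthAt a (pieces L B) ≠ 0) : ∃ b ∈ B, b.1 = a := by
  rw [lengthAt_pieces hlen] at h
  obtain ⟨b, hb, hne⟩ := Finset.exists_ne_zero_of_sum_ne_zero h
  exact ⟨b, hb, by_contra fun h' => hne (if_neg h')⟩

lemma mem_iff_lengthAt_pieces (hL : 0 < L) (hlen : ∀ b ∈ B, L ≤ b.2)
    (hfst : Set.InjOn Prod.fst (B : Set (ℕ × ℕ))) :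
    b ∈ B ↔ 0 < b.2 ∧ lengthAt b.1 (pieces L B) = b.2 := by
  refine ⟨fun hb => ⟨hL.trans_le (hlen b hb), lengthAt_pieces_of_mem hlen hfst hb⟩, ?_⟩
  rintro ⟨hpos, hb⟩
  obtain ⟨b', hb', hfst'⟩ := exists_fst_eq_of_lengthAt_pieces_ne_zero hlen (hb ▸ hpos.ne')
  have hsnd : b'.2 = b.2 := by rw [← lengthAt_pieces_of_mem hlen hfst hb', hfst', hb]
  rwa [← Prod.ext hfst' hsnd]

lemma card_pieces_mul_le (hlen : ∀ b ∈ B, L ≤ b.2) :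
    Multiset.card (pieces L B) * L ≤ ∑ b ∈ B, b.2 := by
  rw [pieces, Multiset.card_bind]
  exact (Finset.sum_mul B _ L).trans_le
    (Finset.sum_le_sum fun b hb => card_breakPieces_mul_le (hlen b hb))

lemma pieces_injOn (hL : 0 < L) :
    Set.InjOn (pieces L)
      {B | (∀ b ∈ B, L ≤ b.2) ∧ Set.InjOn Prod.fst (B : Set (ℕ × ℕ))} := by
  rintro B ⟨hlen, hfst⟩ B' ⟨hlen', hfst'⟩ h
  ext b
  rw [mem_iff_lengthAt_pieces hL hlen hfst, mem_iff_lengthAt_pieces hL hlen' hfst', h]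

end pieces

def IsBreakConfiguration (n L i : ℕ) (B : Finset (ℕ × ℕ)) : Prop :=
  (∀ b ∈ B, L ≤ b.2 ∧ 1 ≤ b.1 ∧ b.1 + b.2 - 1 ≤ n) ∧
    (B : Set (ℕ × ℕ)).Pairwise
      (fun b b' => Disjoint (Finset.Ico b.1 (b.1 + b.2)) (Finset.Ico b'.1 (b'.1 + b'.2))) ∧
    i * L ≤ ∑ b ∈ B, b.2 ∧ ∑ b ∈ B, b.2 < (i + 1) * L

noncomputable def encode (L i : ℕ) (B : Finset (ℕ × ℕ)) : Fin i → ℕ × ℕ :=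
  padToFin (0, 0) i (pieces L B).toList

def pieceSet (n L : ℕ) : Finset (ℕ × ℕ) := insert (0, 0) (Icc 1 n ×ˢ Ico L (2 * L))

lemma card_pieceSet_le (n L : ℕ) : #(pieceSet n L) ≤ n * L + 1 := by
  refine (card_insert_le _ _).trans ?_
  rw [card_product, Nat.card_Icc, Nat.card_Ico, Nat.add_sub_cancel, two_mul, Nat.add_sub_cancel]

namespace IsBreakConfiguration

variable {n L i : ℕ} {p : ℕ × ℕ} {B : Finset (ℕ × ℕ)}

lemma pos (hB : IsBreakConfiguration n L i B) : 0 < L :=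
  Nat.pos_of_ne_zero fun hL => by simpa [hL] using hB.2.2.2

lemma injOn_fst (hB : IsBreakConfiguration n L i B) :
    Set.InjOn Prod.fst (B : Set (ℕ × ℕ)) := by
  intro b hb b' hb' hfst
  by_contra hne
  have hstart : ∀ c ∈ B, c.1 ∈ Finset.Ico c.1 (c.1 + c.2) := fun c hc =>
    Finset.left_mem_Ico.mpr (Nat.lt_add_of_pos_right (hB.pos.trans_le (hB.1 c hc).1))
  exact Finset.disjoint_left.mp (hB.2.1 hb hb' hne) (hstart b hb) (hfst ▸ hstart b' hb')

lemma card_pieces_le (hB : IsBreakConfiguration n L i B) : Multiset.card (pieces L B) ≤ i := by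
  have h := (card_pieces_mul_le fun b hb => (hB.1 b hb).1).trans_lt hB.2.2.2
  exact Nat.lt_succ_iff.mp (Nat.lt_of_mul_lt_mul_right h)

lemma bounds_of_mem_pieces (hB : IsBreakConfiguration n L i B) (hp : p ∈ pieces L B) :
    L ≤ p.2 ∧ p.2 < 2 * L ∧ 1 ≤ p.1 ∧ p.1 + p.2 - 1 ≤ n := by
  obtain ⟨b, hb, hpb⟩ := exists_mem_of_mem_pieces hp
  obtain ⟨hlen, hstart, hend⟩ := hB.1 b hb
  obtain ⟨h₁, h₂, h₃⟩ := snd_of_mem_breakPieces hB.pos hlen hpb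
  have hfst := fst_of_mem_breakPieces hpb
  exact ⟨h₁, h₂, by omega, by omega⟩

lemma encode_apply (hB : IsBreakConfiguration n L i B) (j : Fin i) :
    encode L i B j = (0, 0) ∨ (L ≤ (encode L i B j).2 ∧ (encode L i B j).2 < 2 * L ∧
      1 ≤ (encode L i B j).1 ∧ (encode L i B j).1 + (encode L i B j).2 - 1 ≤ n) :=
  (padToFin_apply_eq_or_mem _ _ _ j).imp_right
    fun h => hB.bounds_of_mem_pieces (Multiset.mem_toList.mp h)

lemma encode_mem_pieceSet (hB : IsBreakConfiguration n L i B) (j : Fin i) :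
    encode L i B j ∈ pieceSet n L := by
  rcases hB.encode_apply j with h | ⟨h₁, h₂, h₃, h₄⟩
  · rw [h]
    exact mem_insert_self _ _
  · exact mem_insert_of_mem
      (mem_product.mpr ⟨mem_Icc.mpr ⟨h₃, by omega⟩, mem_Ico.mpr ⟨h₁, h₂⟩⟩)

lemma toList_pieces_mem (hB : IsBreakConfiguration n L i B) :
    (pieces L B).toList ∈ {l | l.length ≤ i ∧ (0, 0) ∉ l} :=
  ⟨(Multiset.length_toList _).trans_le hB.card_pieces_le,
    fun h => (hB.bounds_of_mem_pieces (Multiset.mem_toList.mp h)).1.not_gt hB.pos⟩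

end IsBreakConfiguration

lemma encode_injOn (n L i : ℕ) : Set.InjOn (encode L i) {B | IsBreakConfiguration n L i B} := by
  intro B hB B' hB' h
  have hlist := padToFin_injOn (0, 0) i hB.toList_pieces_mem hB'.toList_pieces_mem h
  refine pieces_injOn hB.pos ⟨fun b hb => (hB.1 b hb).1, hB.injOn_fst⟩
    ⟨fun b hb => (hB'.1 b hb).1, hB'.injOn_fst⟩ ?_
  rw [← Multiset.coe_toList (pieces L B), hlist, Multiset.coe_toList]

end BreakConfiguration

open BreakConfiguration

theorem break_configuration_count_general (n L i : ℕ) :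
    (∃ f : Finset (ℕ × ℕ) → (Fin i → ℕ × ℕ),
        Set.InjOn f {B : Finset (ℕ × ℕ) |
            (∀ b ∈ B, L ≤ b.2 ∧ 1 ≤ b.1 ∧ b.1 + b.2 - 1 ≤ n) ∧
            (B : Set (ℕ × ℕ)).Pairwise
              (fun b b' => Disjoint (Finset.Ico b.1 (b.1 + b.2)) (Finset.Ico b'.1 (b'.1 + b'.2))) ∧
            i * L ≤ ∑ b ∈ B, b.2 ∧ ∑ b ∈ B, b.2 < (i + 1) * L} ∧
        ∀ B ∈ {B : Finset (ℕ × ℕ) |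
            (∀ b ∈ B, L ≤ b.2 ∧ 1 ≤ b.1 ∧ b.1 + b.2 - 1 ≤ n) ∧
            (B : Set (ℕ × ℕ)).Pairwise
              (fun b b' => Disjoint (Finset.Ico b.1 (b.1 + b.2)) (Finset.Ico b'.1 (b'.1 + b'.2))) ∧
            i * L ≤ ∑ b ∈ B, b.2 ∧ ∑ b ∈ B, b.2 < (i + 1) * L},
          ∀ j : Fin i, (f B j).2 = 0 ∨
            (L ≤ (f B j).2 ∧ (f B j).2 < 2 * L ∧ 1 ≤ (f B j).1 ∧ (f B j).1 + (f B j).2 - 1 ≤ n)) ∧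
    {B : Finset (ℕ × ℕ) |
        (∀ b ∈ B, L ≤ b.2 ∧ 1 ≤ b.1 ∧ b.1 + b.2 - 1 ≤ n) ∧
        (B : Set (ℕ × ℕ)).Pairwise
          (fun b b' => Disjoint (Finset.Ico b.1 (b.1 + b.2)) (Finset.Ico b'.1 (b'.1 + b'.2))) ∧
        i * L ≤ ∑ b ∈ B, b.2 ∧ ∑ b ∈ B, b.2 < (i + 1) * L}.ncard ≤ (n * L + 1) ^ i := by
  refine ⟨⟨encode L i, encode_injOn n L i, fun B hB j =>
    (IsBreakConfiguration.encode_apply hB j).imp_left fun h => by rw [h]⟩, ?_⟩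
  calc _ ≤ (Fintype.piFinset fun _ : Fin i => pieceSet n L : Set (Fin i → ℕ × ℕ)).ncard :=
        Set.ncard_le_ncard_of_injOn (encode L i)
          (fun B hB => Fintype.mem_piFinset.mpr (IsBreakConfiguration.encode_mem_pieceSet hB))
          (encode_injOn n L i) (Finset.finite_toSet _)
    _ = #(pieceSet n L) ^ i := by
        rw [Set.ncard_coe_finset, Fintype.card_piFinset, prod_const, card_univ, Fintype.card_fin]
    _ ≤ (n * L + 1) ^ i := Nat.pow_le_pow_left (card_pieceSet_le n L) i

/-- **Counting break configurations.** Fix a threshold `L` (`= k ln n` in the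
paper) with `L ≥ 1`. Consider sets `B` of disjoint "breaks": intervals within
`[1, n]`, each of length at least `L`, with total length in `[i·L, (i+1)·L)`.
(An interval is recorded as a pair `(start, length)` with length positive,
representing `{start, …, start + length − 1}`.)

Every such configuration can be injectively mapped to a function giving `i` (or
fewer) contiguous subintervals of `[1, n]`, each either empty or of a length in
`[L, 2L)`; consequently the number of such configurations is at most
`(n·L + 1)^i`. -/
theorem break_configuration_count (n L i : ℕ) (hL : 1 ≤ L) :
    (∃ f : Finset (ℕ × ℕ) → (Fin i → ℕ × ℕ),
        Set.InjOn f {B : Finset (ℕ × ℕ) |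
            (∀ b ∈ B, L ≤ b.2 ∧ 1 ≤ b.1 ∧ b.1 + b.2 - 1 ≤ n) ∧
            (B : Set (ℕ × ℕ)).Pairwise
              (fun b b' => Disjoint (Finset.Ico b.1 (b.1 + b.2)) (Finset.Ico b'.1 (b'.1 + b'.2))) ∧
            i * L ≤ ∑ b ∈ B, b.2 ∧ ∑ b ∈ B, b.2 < (i + 1) * L} ∧
        ∀ B ∈ {B : Finset (ℕ × ℕ) |
            (∀ b ∈ B, L ≤ b.2 ∧ 1 ≤ b.1 ∧ b.1 + b.2 - 1 ≤ n) ∧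
            (B : Set (ℕ × ℕ)).Pairwise
              (fun b b' => Disjoint (Finset.Ico b.1 (b.1 + b.2)) (Finset.Ico b'.1 (b'.1 + b'.2))) ∧
            i * L ≤ ∑ b ∈ B, b.2 ∧ ∑ b ∈ B, b.2 < (i + 1) * L},
          ∀ j : Fin i, (f B j).2 = 0 ∨
            (L ≤ (f B j).2 ∧ (f B j).2 < 2 * L ∧ 1 ≤ (f B j).1 ∧ (f B j).1 + (f B j).2 - 1 ≤ n)) ∧
    {B : Finset (ℕ × ℕ) |
        (∀ b ∈ B, L ≤ b.2 ∧ 1 ≤ b.1 ∧ b.1 + b.2 - 1 ≤ n) ∧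
        (B : Set (ℕ × ℕ)).Pairwise
          (fun b b' => Disjoint (Finset.Ico b.1 (b.1 + b.2)) (Finset.Ico b'.1 (b'.1 + b'.2))) ∧
        i * L ≤ ∑ b ∈ B, b.2 ∧ ∑ b ∈ B, b.2 < (i + 1) * L}.ncard ≤ (n * L + 1) ^ i :=
  break_configuration_count_general n L i
end

section
/- For any 0 < c < 0.03485 and κ with 0 < κ < c, the quantity ((1 + (3/2)c)^{1+(3/2)c} / ((c/2)^c · (1 − c/2)^{1−c/2})) · exp(−(2−5c)²/(8(2−c))) is strictly less than 1. -/
open Real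

set_option maxHeartbeats 1000000

/-- `t ↦ -t * log t` is strictly increasing on `(0, e⁻¹]`. -/
lemma aux_neg_mul_log_mono {a b : ℝ} (ha : 0 < a) (hab : a < b)
    (hb : b ≤ Real.exp (-1)) : b * Real.log b < a * Real.log a := by
  have hb0 : 0 < b := ha.trans hab
  have hlb : Real.log b ≤ -1 := by
    calc Real.log b ≤ Real.log (Real.exp (-1)) := Real.log_le_log hb0 hb
      _ = -1 := Real.log_exp _
  have hba : Real.log (b / a) < b / a - 1 :=
    Real.log_lt_sub_one_of_pos (by positivity) (by
      intro h
      rw [div_eq_one_iff_eq (ne_of_gt ha)] at h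
      exact absurd h (ne_of_gt hab))
  have hdiv : Real.log (b / a) = Real.log b - Real.log a :=
    Real.log_div (ne_of_gt hb0) (ne_of_gt ha)
  rw [hdiv] at hba
  have h1 : a * (Real.log b - Real.log a) < a * (b / a - 1) :=
    mul_lt_mul_of_pos_left hba ha
  have h2 : a * (b / a - 1) = b - a := by field_simp
  nlinarith [mul_nonpos_of_nonneg_of_nonpos (le_of_lt (sub_pos.mpr hab))
    (by linarith : Real.log b + 1 ≤ 0)]

/-- `t ↦ t * log t` is strictly increasing on `[e⁻¹, ∞)`. -/
lemma aux_mul_log_mono {a b : ℝ} (ha : Real.exp (-1) ≤ a) (hab : a < b) :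
    a * Real.log a < b * Real.log b := by
  have ha0 : 0 < a := lt_of_lt_of_le (Real.exp_pos _) ha
  have hb0 : 0 < b := ha0.trans hab
  have hla : -1 ≤ Real.log a := by
    calc (-1 : ℝ) = Real.log (Real.exp (-1)) := (Real.log_exp _).symm
      _ ≤ Real.log a := Real.log_le_log (Real.exp_pos _) ha
  have hba : Real.log (a / b) < a / b - 1 :=
    Real.log_lt_sub_one_of_pos (by positivity) (by
      intro h
      rw [div_eq_one_iff_eq (ne_of_gt hb0)] at h
      exact absurd h (ne_of_lt hab))
  have hdiv : Real.log (a / b) = Real.log a - Real.log b :=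
    Real.log_div (ne_of_gt ha0) (ne_of_gt hb0)
  rw [hdiv] at hba
  have h1 : b * (Real.log a - Real.log b) < b * (a / b - 1) :=
    mul_lt_mul_of_pos_left hba hb0
  have h2 : b * (a / b - 1) = a - b := by field_simp
  nlinarith [mul_nonneg (le_of_lt (sub_pos.mpr hab)) (by linarith : 0 ≤ Real.log a + 1)]

/-- Numeric bound: `log 1.052275 < 0.0509550`. -/
lemma aux_log1 : Real.log 1.052275 < 0.0509550 := by
  rw [Real.log_lt_iff_lt_exp (by norm_num)]
  have h := Real.sum_le_exp_of_nonneg (x := 0.0509550) (by norm_num) 6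
  refine lt_of_lt_of_le ?_ h
  simp only [Finset.sum_range_succ, Finset.sum_range_zero]
  norm_num [Nat.factorial]

/-- Numeric bound: `log (0.982575⁻¹) < 0.0175791`. -/
lemma aux_log3 : Real.log (0.982575⁻¹ : ℝ) < 0.0175791 := by
  rw [Real.log_lt_iff_lt_exp (by norm_num)]
  have h := Real.sum_le_exp_of_nonneg (x := 0.0175791) (by norm_num) 6
  refine lt_of_lt_of_le ?_ h
  simp only [Finset.sum_range_succ, Finset.sum_range_zero]
  norm_num [Nat.factorial]

/-- Numeric bound: `log (0.017425⁻¹) < 4.049859`. -/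
lemma aux_log2 : Real.log (0.017425⁻¹ : ℝ) < 4.049859 := by
  rw [Real.log_lt_iff_lt_exp (by norm_num)]
  have h4 : Real.exp (4.049859 : ℝ) = Real.exp 1 ^ 4 * Real.exp 0.049859 := by
    rw [← Real.exp_nat_mul, ← Real.exp_add]
    norm_num
  rw [h4]
  have he : (2.7182818283 : ℝ) ^ 4 ≤ Real.exp 1 ^ 4 :=
    pow_le_pow_left₀ (by norm_num) (le_of_lt Real.exp_one_gt_d9) 4
  have hs := Real.sum_le_exp_of_nonneg (x := 0.049859) (by norm_num) 7
  have hs' : (1.0511227 : ℝ) ≤ Real.exp 0.049859 := by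
    refine le_trans ?_ hs
    simp only [Finset.sum_range_succ, Finset.sum_range_zero]
    norm_num [Nat.factorial]
  calc (0.017425⁻¹ : ℝ) < 2.7182818283 ^ 4 * 1.0511227 := by norm_num
    _ ≤ Real.exp 1 ^ 4 * Real.exp 0.049859 := by
        refine mul_le_mul he hs' (by norm_num) (by positivity)

/-- The real-analytic inequality making the union bound over off-diagonal
alignments decay exponentially in the indel case: for any `0 < c < 0.03485`
and `κ` with `0 < κ < c` (the length imbalance parameter),
`((1+(3/2)c)^(1+(3/2)c) / ((c/2)^c · (1−c/2)^(1−c/2))) · exp(−(2−5c)²/(8(2−c))) < 1`. -/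
theorem indel_base_lt_one (c κ : ℝ) (hc0 : 0 < c) (hc : c < 0.03485)
    (hκ0 : 0 < κ) (hκ : κ < c) :
    (1 + (3 / 2) * c) ^ (1 + (3 / 2) * c) / ((c / 2) ^ c * (1 - c / 2) ^ (1 - c / 2)) *
      Real.exp (-(2 - 5 * c) ^ 2 / (8 * (2 - c))) < 1 := by
  have hx1 : (0:ℝ) < 1 + (3 / 2) * c := by linarith
  have hx2 : (0:ℝ) < c / 2 := by linarith
  have hx3 : (0:ℝ) < 1 - c / 2 := by linarith
  -- rewrite everything as a single exponential
  have hrw : (1 + (3 / 2) * c) ^ (1 + (3 / 2) * c) /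
      ((c / 2) ^ c * (1 - c / 2) ^ (1 - c / 2)) *
      Real.exp (-(2 - 5 * c) ^ 2 / (8 * (2 - c))) =
      Real.exp ((1 + (3 / 2) * c) * Real.log (1 + (3 / 2) * c)
        - c * Real.log (c / 2) - (1 - c / 2) * Real.log (1 - c / 2)
        + (-(2 - 5 * c) ^ 2 / (8 * (2 - c)))) := by
    rw [Real.rpow_def_of_pos hx1, Real.rpow_def_of_pos hx2, Real.rpow_def_of_pos hx3,
      ← Real.exp_add, ← Real.exp_sub, ← Real.exp_add]
    ring_nf
  rw [hrw, Real.exp_lt_one_iff]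
  -- endpoint comparisons via monotonicity
  have einv_lb : (1:ℝ)/57 ≤ Real.exp (-1) := by
    rw [Real.exp_neg]
    have h1 : Real.exp 1 ≤ 57 := le_of_lt (lt_trans Real.exp_one_lt_d9 (by norm_num))
    rw [one_div]
    exact inv_anti₀ (Real.exp_pos 1) h1
  have einv_ub : Real.exp (-1) ≤ 0.982575 := by
    rw [Real.exp_neg]
    have h1 : (2.7182818283 : ℝ) ≤ Real.exp 1 := le_of_lt Real.exp_one_gt_d9
    have h2 : (Real.exp 1)⁻¹ ≤ (2.7182818283 : ℝ)⁻¹ := inv_anti₀ (by norm_num) h1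
    have h3 : ((2.7182818283 : ℝ))⁻¹ ≤ 0.982575 := by norm_num
    linarith
  -- Term 1 : (1+1.5c) log(1+1.5c) < 1.052275 * 0.0509550
  have hT1 : (1 + (3 / 2) * c) * Real.log (1 + (3 / 2) * c) <
      1.052275 * 0.0509550 := by
    have hlog_nonneg : 0 ≤ Real.log (1 + (3 / 2) * c) :=
      Real.log_nonneg (by linarith)
    have hlt : Real.log (1 + (3 / 2) * c) < 0.0509550 :=
      lt_of_le_of_lt (Real.log_le_log hx1 (by linarith)) aux_log1
    have hb : (1 + (3 / 2) * c) < 1.052275 := by linarith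
    calc (1 + (3 / 2) * c) * Real.log (1 + (3 / 2) * c)
        ≤ (1 + (3 / 2) * c) * 0.0509550 := by nlinarith
      _ < 1.052275 * 0.0509550 := by nlinarith
  -- Term 2 : -c log(c/2) < 0.03485 * 4.049859
  have hT2 : -(c * Real.log (c / 2)) < 0.03485 * 4.049859 := by
    have hmono := aux_neg_mul_log_mono (a := c / 2) (b := 0.017425)
      hx2 (by linarith) (by linarith [einv_lb])
    -- c * log(c/2) = 2 * ((c/2) * log(c/2))
    have h2 : -(c * Real.log (c / 2)) = 2 * (-((c/2) * Real.log (c/2))) := by ring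
    have hlog2 : Real.log (0.017425 : ℝ) = -Real.log (0.017425⁻¹ : ℝ) := by
      rw [Real.log_inv]; ring
    have hb : -((0.017425 : ℝ) * Real.log 0.017425) < 0.017425 * 4.049859 := by
      rw [hlog2]
      have := aux_log2
      nlinarith
    rw [h2]
    nlinarith
  -- Term 3 : -(1-c/2) log(1-c/2) < 0.982575 * 0.0175791
  have hT3 : -((1 - c / 2) * Real.log (1 - c / 2)) < 0.982575 * 0.0175791 := by
    have hmono := aux_mul_log_mono (a := (0.982575 : ℝ)) (b := 1 - c / 2)
      einv_ub (by linarith)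
    have hlog3 : Real.log (0.982575 : ℝ) = -Real.log (0.982575⁻¹ : ℝ) := by
      rw [Real.log_inv]; ring
    have hb : -((0.982575 : ℝ) * Real.log 0.982575) < 0.982575 * 0.0175791 := by
      rw [hlog3]
      have := aux_log3
      nlinarith
    linarith
  -- Term 4 : the exponent is at least its endpoint value
  have hT4 : (2 - 5 * (0.03485:ℝ)) ^ 2 / (8 * (2 - 0.03485)) ≤
      (2 - 5 * c) ^ 2 / (8 * (2 - c)) := by
    rw [div_le_div_iff₀ (by norm_num) (by nlinarith)]
    have key : 0 ≤ (0.03485 - c) * (36 - 50 * (c + 0.03485) + 25 * c * 0.03485) :=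
      mul_nonneg (by linarith) (by nlinarith)
    nlinarith [key]
  have hfinal : (1.052275 : ℝ) * 0.0509550 + 0.03485 * 4.049859 +
      0.982575 * 0.0175791 - (2 - 5 * (0.03485:ℝ)) ^ 2 / (8 * (2 - 0.03485)) < 0 := by
    norm_num
  have hneg : -(2 - 5 * c) ^ 2 / (8 * (2 - c)) = -((2 - 5 * c) ^ 2 / (8 * (2 - c))) := by
    ring
  linarith [hneg]
end
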